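/- For every natural number m, one has F (2m+1) = ε · (F m)² in R. (Lemma 4.1(2), first identity.) -/
import Mathlib


/- Context: `R = ℤ[ε,ξ,h]/(2ε)`, `F 0 = 1`, `F 1 = ε`,
`F (m+2) = ε·F(m+1) + (ξh)·F m`.
Statement 0 (Lemma 4.1(1)): closed formula
`F m = ∑_{a+2b=m} C(a+b,b) ε^a ξ^b h^b = ∑_{b=0}^{⌊m/2⌋} C(m-b,b) ε^(m-2b) (ξh)^b`. -/

noncomputable section

open MvPolynomial

abbrev Rpre : Type := MvPolynomial (Fin 3) ℤ

def Rideal : Ideal Rpre := Ideal.span {2 * X 0}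

abbrev Rring : Type := Rpre ⧸ Rideal

def ε : Rring := Ideal.Quotient.mk Rideal (X 0)
def ξ : Rring := Ideal.Quotient.mk Rideal (X 1)
def h : Rring := Ideal.Quotient.mk Rideal (X 2)

def F : ℕ → Rring
  | 0 => 1
  | 1 => ε
  | m + 2 => ε * F (m + 1) + (ξ * h) * F m

lemma two_eps : (2 : Rring) * ε = 0 := by
  have h0 : ((Ideal.Quotient.mk Rideal) (2 * X 0)) = 0 :=
    Ideal.Quotient.eq_zero_iff_mem.mpr (Ideal.subset_span rfl)
  have h1 : (2 : Rring) * ε = (Ideal.Quotient.mk Rideal) (2 * X 0) := by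
    simp [ε, map_mul, map_ofNat]
  rw [h1, h0]

lemma F_add (m n : ℕ) :
    F (m + n + 2) = F (m + 1) * F (n + 1) + (ξ * h) * F m * F n := by
  induction n using Nat.twoStepInduction with
  | zero =>
    show F (m + 2) = _
    rw [show F (m + 2) = ε * F (m + 1) + (ξ * h) * F m from rfl]
    simp [F]; ring
  | one =>
    rw [show m + 1 + 2 = (m + 1) + 2 from rfl,
        show F (m + 1 + 2) = ε * F (m + 2) + (ξ * h) * F (m + 1) from rfl,
        show F (m + 2) = ε * F (m + 1) + (ξ * h) * F m from rfl,
        show F 2 = ε * F 1 + (ξ * h) * F 0 from rfl]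
    simp [F]; ring
  | more k ih1 ih2 =>
    have e : m + (k + 2) + 2 = (m + k + 2) + 2 := by ring
    rw [e, show F ((m + k + 2) + 2) = ε * F (m + k + 2 + 1) + (ξ * h) * F (m + k + 2) from rfl,
        show m + k + 2 + 1 = m + (k + 1) + 2 from by ring, ih2, ih1,
        show F (k + 2 + 1) = ε * F (k + 2) + (ξ * h) * F (k + 1) from rfl,
        show F (k + 2) = ε * F (k + 1) + (ξ * h) * F k from rfl]
    ring

/- Statement 1 (Lemma 4.1(2), first identity): `F (2m+1) = ε · (F m)²`. -/
theorem F_odd_square (m : ℕ) : F (2 * m + 1) = ε * (F m) ^ 2 := by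
  induction m using Nat.strong_induction_on with
  | _ m ih =>
    match m with
    | 0 => simp [F]
    | k + 1 =>
      have hidx : 2 * (k + 1) + 1 = (k + 1) + k + 2 := by ring
      rw [hidx, F_add (k + 1) k]
      have hdiv : ∃ c, F (k + 1) * F k = ε * c := by
        rcases Nat.even_or_odd k with ⟨j, hj⟩ | ⟨j, hj⟩
        · have hjlt : j < k + 1 := by omega
          have hkj : F (k + 1) = ε * F j ^ 2 := by
            rw [show k + 1 = 2 * j + 1 from by omega]; exact ih j hjlt
          exact ⟨F j ^ 2 * F k, by rw [hkj]; ring⟩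
        · have hjlt : j < k + 1 := by omega
          have hkj : F k = ε * F j ^ 2 := by
            rw [show k = 2 * j + 1 from by omega]; exact ih j hjlt
          exact ⟨F (k + 1) * F j ^ 2, by rw [hkj]; ring⟩
      obtain ⟨c, hc⟩ := hdiv
      calc F (k + 1 + 1) * F (k + 1) + (ξ * h) * F (k + 1) * F k
          = ε * F (k + 1) ^ 2 + 2 * ((ξ * h) * (F (k + 1) * F k)) := by
            rw [show F (k + 1 + 1) = ε * F (k + 1) + (ξ * h) * F k from rfl]; ring
        _ = ε * F (k + 1) ^ 2 + (ξ * h) * c * (2 * ε) := by rw [hc]; ring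
        _ = ε * F (k + 1) ^ 2 := by rw [two_eps]; ring

end
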